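/- arXiv:1607.06484 — 4 statements merged into one kernel-verified Lean document; each statement's English description precedes it below -/
import Mathlib

section
/- Existence part of the key property of s-holomorphic functions (Proposition 3.3, existence): Fix δ > 0, integers m < n and reals c < d, and let Ω^• , Ω^∘ be the black and white points of the discrete rectangular domain Ω_δ. Let F : ℂ → ℂ be such that its restriction to each vertical segment of Ω^• ∪ Ω^∘ is continuous, and F is s-holomorphic at every interior white point and at every interior black point of Ω_δ. Then there exists a function H : Ω^• ∪ Ω^∘ → ℝ, whose restriction to each vertical segment is continuous, such that: (a) for every white point z ∈ Ω^∘ with z + δ/2 ∈ Ω^•, H(z + δ/2) − H(z) = |F^↓(z)|², and for every black point z ∈ Ω^• with z + δ/2 ∈ Ω^∘, H(z + δ/2) − H(z) = −|F^↑(z)|²; and (b) at every point z ∈ Ω^• ∪ Ω^∘ with c < Im z < d, the vertical derivative Ḣ(z) exists and equals (2/δ)·F^↑(z)·F^↓(z) (which is a real number). -/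
noncomputable section

/-- Projection of `a` onto the line `e^{-iπ/4}·ℝ`. -/
def projUp (a : ℂ) : ℂ := (a - Complex.I * (starRingEnd ℂ) a) / 2

/-- Projection of `a` onto the line `e^{iπ/4}·ℝ`. -/
def projDn (a : ℂ) : ℂ := (a + Complex.I * (starRingEnd ℂ) a) / 2

/-- `F^↑(z)`, the projection of `F z` onto `e^{-iπ/4}·ℝ`. -/
def Fup (F : ℂ → ℂ) (z : ℂ) : ℂ := projUp (F z)

/-- `F^↓(z)`, the projection of `F z` onto `e^{iπ/4}·ℝ`. -/
def Fdn (F : ℂ → ℂ) (z : ℂ) : ℂ := projDn (F z)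

/-- Vertical derivative: `G` has derivative `d` at `z` in the vertical direction,
i.e. the map `t ↦ G (z + i t)` (for real `t`) has derivative `d` at `t = 0`. -/
def HasVDerivAt {E : Type*} [NormedAddCommGroup E] [NormedSpace ℝ E]
    (G : ℂ → E) (d : E) (z : ℂ) : Prop :=
  HasDerivAt (fun t : ℝ => G (z + (t : ℂ) * Complex.I)) d 0

/-- Second vertical derivative: there is a function `G'` which is a vertical derivative of `G`
at all points `z + i t` for `t` near `0`, and `G'` has vertical derivative `d` at `z`. -/
def HasVDeriv2At {E : Type*} [NormedAddCommGroup E] [NormedSpace ℝ E]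
    (G : ℂ → E) (d : E) (z : ℂ) : Prop :=
  ∃ G' : ℂ → E,
    (∀ᶠ t in nhds (0 : ℝ), HasVDerivAt G (G' (z + (t : ℂ) * Complex.I)) (z + (t : ℂ) * Complex.I))
    ∧ HasVDerivAt G' d z

/-- `F` is s-holomorphic at a white point `w`. -/
def SHolWhite (δ : ℝ) (F : ℂ → ℂ) (w : ℂ) : Prop :=
  Fup F w = Fup F (w - (δ / 2 : ℝ)) ∧ Fdn F w = Fdn F (w + (δ / 2 : ℝ)) ∧
  HasVDerivAt (Fup F) (Complex.I / δ * (Fdn F (w + (δ / 2 : ℝ)) - Fdn F (w - (δ / 2 : ℝ)))) w ∧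
  HasVDerivAt (Fdn F) (Complex.I / δ * (Fup F (w + (δ / 2 : ℝ)) - Fup F (w - (δ / 2 : ℝ)))) w

/-- `F` is s-holomorphic at a black point `u`. -/
def SHolBlack (δ : ℝ) (F : ℂ → ℂ) (u : ℂ) : Prop :=
  Fup F u = Fup F (u + (δ / 2 : ℝ)) ∧ Fdn F u = Fdn F (u - (δ / 2 : ℝ)) ∧
  HasVDerivAt (Fup F) (Complex.I / δ * (Fdn F (u + (δ / 2 : ℝ)) - Fdn F (u - (δ / 2 : ℝ)))) u ∧
  HasVDerivAt (Fdn F) (Complex.I / δ * (Fup F (u + (δ / 2 : ℝ)) - Fup F (u - (δ / 2 : ℝ)))) u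

/-- Black points `Ω^•` of the rectangular discrete domain `Ω_δ`:
points `δ k + i t` with `m ≤ k ≤ n` and `t ∈ [c, d]`. -/
def BlackPts (δ : ℝ) (m n : ℤ) (c d : ℝ) : Set ℂ :=
  {z | (∃ k : ℤ, m ≤ k ∧ k ≤ n ∧ z.re = δ * k) ∧ c ≤ z.im ∧ z.im ≤ d}

/-- White points `Ω^∘` of the rectangular discrete domain `Ω_δ`:
points `δ (k + 1/2) + i t` with `m ≤ k ≤ n - 1` and `t ∈ [c, d]`. -/
def WhitePts (δ : ℝ) (m n : ℤ) (c d : ℝ) : Set ℂ :=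
  {z | (∃ k : ℤ, m ≤ k ∧ k ≤ n - 1 ∧ z.re = δ * (k + 1 / 2)) ∧ c ≤ z.im ∧ z.im ≤ d}

/-- Interior black points: `m < k < n` and `c < t < d`. -/
def IntBlackPts (δ : ℝ) (m n : ℤ) (c d : ℝ) : Set ℂ :=
  {z | (∃ k : ℤ, m < k ∧ k < n ∧ z.re = δ * k) ∧ c < z.im ∧ z.im < d}

/-- Interior white points: `m ≤ k ≤ n - 1` and `c < t < d`. -/
def IntWhitePts (δ : ℝ) (m n : ℤ) (c d : ℝ) : Set ℂ :=
  {z | (∃ k : ℤ, m ≤ k ∧ k ≤ n - 1 ∧ z.re = δ * (k + 1 / 2)) ∧ c < z.im ∧ z.im < d}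

/-!
On each vertical line of `Ω_δ` the function `H` is taken to be a primitive of the real density
`(2/δ) F^↑ F^↓`, with the additive constants of consecutive lines chosen so that the increment
relations hold at the bottom height `t = c`. They then hold at every height: by s-holomorphicity at
the white points, the vertical derivative of `|F^↓|²` along a white line, and of `-|F^↑|²` along the
black line to its left, is exactly the difference of the densities on the two lines concerned.
-/

open Complex ComplexConjugate Set Filter Topology

section LadderPrimitive

variable {c d : ℝ} {j₀ j₁ : ℤ} {g N : ℤ → ℝ → ℝ}

theorem exists_ladder_primitive (hcd : c ≤ d)
    (hg : ∀ j ∈ Icc j₀ j₁, ContinuousOn (g j) (Icc c d))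
    (hN : ∀ j ∈ Ico j₀ j₁, ContinuousOn (N j) (Icc c d))
    (hN' : ∀ j ∈ Ico j₀ j₁, ∀ s ∈ Ioo c d, HasDerivAt (N j) (g (j + 1) s - g j s) s) :
    ∃ h : ℤ → ℝ → ℝ, (∀ j ∈ Icc j₀ j₁, ContinuousOn (h j) (Icc c d)) ∧
      (∀ j ∈ Ico j₀ j₁, ∀ t ∈ Icc c d, h (j + 1) t - h j t = N j t) ∧
      (∀ j ∈ Icc j₀ j₁, ∀ t ∈ Ioo c d, HasDerivAt (h j) (g j t) t) := by
  have hint : ∀ j ∈ Icc j₀ j₁, ∀ t ∈ Icc c d, IntervalIntegrable (g j) MeasureTheory.volume c t :=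
    fun j hj t ht => ((hg j hj).mono (Icc_subset_Icc_right ht.2)).intervalIntegrable_of_Icc ht.1
  refine ⟨fun j t => ∑ i ∈ Finset.Ico j₀ j, N i c + ∫ s in c..t, g j s, ?_, ?_, ?_⟩
  · intro j hj
    have := intervalIntegral.continuousOn_primitive_interval' (hint j hj d ⟨hcd, le_rfl⟩)
      left_mem_uIcc
    exact continuousOn_const.add (this.mono Icc_subset_uIcc)
  · intro j hj t ht
    have hj' : j ∈ Icc j₀ j₁ := ⟨hj.1, hj.2.le⟩
    have hj1 : j + 1 ∈ Icc j₀ j₁ := ⟨by linarith [hj.1], hj.2⟩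
    have hftc : ∫ s in c..t, (g (j + 1) s - g j s) = N j t - N j c :=
      intervalIntegral.integral_eq_sub_of_hasDerivAt_of_le ht.1
        ((hN j hj).mono (Icc_subset_Icc_right ht.2))
        (fun s hs => hN' j hj s ⟨hs.1, hs.2.trans_le ht.2⟩)
        ((hint _ hj1 t ht).sub (hint j hj' t ht))
    rw [intervalIntegral.integral_sub (hint _ hj1 t ht) (hint j hj' t ht)] at hftc
    dsimp only
    rw [← Finset.insert_Ico_right_eq_Ico_add_one hj.1, Finset.sum_insert Finset.right_notMem_Ico]
    linarith
  · intro j hj t ht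
    have hgt := (hg j hj).mono Ioo_subset_Icc_self
    exact (intervalIntegral.integral_hasDerivAt_right (hint j hj t (Ioo_subset_Icc_self ht))
      (hgt.stronglyMeasurableAtFilter isOpen_Ioo t ht)
      (hgt.continuousAt (isOpen_Ioo.mem_nhds ht))).const_add _

end LadderPrimitive

theorem conj_projUp (a : ℂ) : conj (projUp a) = I * projUp a := by
  simp only [projUp, map_div₀, map_sub, map_mul, conj_conj, conj_I, map_ofNat]
  linear_combination (conj a / 2) * I_mul_I

theorem conj_projDn (a : ℂ) : conj (projDn a) = -I * projDn a := by
  simp only [projDn, map_div₀, map_add, map_mul, conj_conj, conj_I, map_ofNat]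
  linear_combination (conj a / 2) * I_mul_I

theorem ofReal_re_projUp_mul_projDn (a b : ℂ) :
    ((projUp a * projDn b).re : ℂ) = projUp a * projDn b := by
  refine conj_eq_iff_re.mp ?_
  rw [map_mul, conj_projUp, conj_projDn]
  linear_combination -(projUp a * projDn b) * I_mul_I

theorem continuous_projUp : Continuous projUp := by
  unfold projUp; fun_prop

theorem continuous_projDn : Continuous projDn := by
  unfold projDn; fun_prop

def vDerivH (δ : ℝ) (F : ℂ → ℂ) (z : ℂ) : ℝ := 2 / δ * (Fup F z * Fdn F z).re

theorem ofReal_vDerivH (δ : ℝ) (F : ℂ → ℂ) (z : ℂ) :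
    (vDerivH δ F z : ℂ) = 2 / δ * Fup F z * Fdn F z := by
  simp only [vDerivH, Fup, Fdn, ofReal_mul, ofReal_div, ofReal_ofNat, mul_assoc,
    ofReal_re_projUp_mul_projDn]

section VerticalDerivative

variable {E : Type*} [NormedAddCommGroup E]

theorem hasVDerivAt_add_mul_I_iff [NormedSpace ℝ E] {G : ℂ → E} {D : E} {z : ℂ} {s : ℝ} :
    HasVDerivAt G D (z + s * I) ↔ HasDerivAt (fun t : ℝ => G (z + t * I)) D s := by
  have hshift : ∀ t : ℝ, z + s * I + t * I = z + ((s + t : ℝ) : ℂ) * I := fun t => by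
    push_cast; ring
  simp only [HasVDerivAt, hshift]
  constructor
  · intro h
    convert HasDerivAt.comp_const_add (-s) s (by rwa [neg_add_cancel]) using 1
    simp
  · intro h
    exact HasDerivAt.comp_const_add s 0 (by rwa [add_zero])

theorem HasVDerivAt.norm_sq [InnerProductSpace ℝ E] {G : ℂ → E} {D : E} {z : ℂ}
    (h : HasVDerivAt G D z) :
    HasVDerivAt (fun w => ‖G w‖ ^ 2) (2 * inner ℝ (G z) D) z := by
  simpa [HasVDerivAt] using HasDerivAt.norm_sq h

end VerticalDerivative

section SHolomorphic

variable {δ : ℝ} {F : ℂ → ℂ} {w : ℂ}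

theorem SHolWhite.hasVDerivAt_norm_sq_Fdn (hw : SHolWhite δ F w) :
    HasVDerivAt (fun z => ‖Fdn F z‖ ^ 2) (vDerivH δ F (w + (δ / 2 : ℝ)) - vDerivH δ F w) w := by
  obtain ⟨hup, hdn, -, hdn'⟩ := hw
  convert hdn'.norm_sq using 1
  rw [Complex.inner, vDerivH, vDerivH, ← hdn, hup]
  set D := Fdn F w
  have hD : conj D = -I * D := conj_projDn _
  have : I / δ * (Fup F (w + (δ / 2 : ℝ)) - Fup F (w - (δ / 2 : ℝ))) * conj D
      = (Fup F (w + (δ / 2 : ℝ)) * D - Fup F (w - (δ / 2 : ℝ)) * D) / δ := by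
    rw [hD]
    linear_combination (-(Fup F (w + (δ / 2 : ℝ)) - Fup F (w - (δ / 2 : ℝ))) * D / δ) * I_mul_I
  rw [this, div_ofReal_re, sub_re]
  ring

/-- Along a black line `F^↑` agrees with `F^↑` on the white line to its right, so its vertical
derivative is governed by s-holomorphicity there. -/
theorem hasVDerivAt_neg_norm_sq_Fup_of_eventually_sHolWhite
    (hw : ∀ᶠ t : ℝ in 𝓝 0, SHolWhite δ F (w + t * I)) :
    HasVDerivAt (fun z => -‖Fup F z‖ ^ 2)
      (vDerivH δ F w - vDerivH δ F (w - (δ / 2 : ℝ))) (w - (δ / 2 : ℝ)) := by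
  obtain ⟨hup, hdn, hup', -⟩ := hw.self_of_nhds
  simp only [ofReal_zero, zero_mul, add_zero] at hup hdn hup'
  have hup_left : HasVDerivAt (Fup F)
      (I / δ * (Fdn F (w + (δ / 2 : ℝ)) - Fdn F (w - (δ / 2 : ℝ)))) (w - (δ / 2 : ℝ)) := by
    refine HasDerivAt.congr_of_eventuallyEq hup' ?_
    filter_upwards [hw] with t ht
    rw [ht.1, sub_add_eq_add_sub]
  refine (HasDerivAt.neg hup_left.norm_sq).congr_deriv ?_
  rw [Complex.inner, vDerivH, vDerivH, ← hup, ← hdn]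
  set U := Fup F w
  have hU : conj U = I * U := conj_projUp _
  have : I / δ * (Fdn F w - Fdn F (w - (δ / 2 : ℝ))) * conj U
      = -((U * Fdn F w - U * Fdn F (w - (δ / 2 : ℝ))) / δ) := by
    rw [hU]; linear_combination (U * (Fdn F w - Fdn F (w - (δ / 2 : ℝ))) / δ) * I_mul_I
  rw [this, neg_re, div_ofReal_re, sub_re]
  ring

end SHolomorphic

/-- The vertical line `Re z = δ j / 2`: black points lie on the lines with even `j`,
white points on those with odd `j`. -/
def column (δ : ℝ) (j : ℤ) (t : ℝ) : ℂ := ((δ * j / 2 : ℝ) : ℂ) + t * I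

def columnJump (δ : ℝ) (F : ℂ → ℂ) (j : ℤ) (t : ℝ) : ℝ :=
  if Even j then -‖Fup F (column δ j t)‖ ^ 2 else ‖Fdn F (column δ j t)‖ ^ 2

def columnIndex (δ : ℝ) (z : ℂ) : ℤ := round (2 * z.re / δ)

section Column

variable {δ : ℝ} {m n : ℤ} {c d : ℝ} {F : ℂ → ℂ} {j : ℤ} {z : ℂ}

@[simp]
theorem column_re (t : ℝ) : (column δ j t).re = δ * j / 2 := by simp [column]

@[simp]
theorem column_im (t : ℝ) : (column δ j t).im = t := by simp [column]

theorem column_add_half (t : ℝ) : column δ j t + (δ / 2 : ℝ) = column δ (j + 1) t := by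
  simp only [column]; push_cast; ring

theorem column_add_mul_I (s t : ℝ) : column δ j s + t * I = column δ j (s + t) := by
  simp only [column]; push_cast; ring

theorem eq_column_im_of_re (hz : z.re = δ * j / 2) : z = column δ j z.im :=
  Complex.ext (by simp [hz]) (by simp)

theorem columnIndex_column (hδ : δ ≠ 0) (t : ℝ) : columnIndex δ (column δ j t) = j := by
  rw [columnIndex, column_re, show 2 * (δ * j / 2) / δ = (j : ℝ) by field_simp, round_intCast]

theorem exists_eq_column_of_mem_blackPts (hz : z ∈ BlackPts δ m n c d) :
    ∃ k ∈ Icc m n, ∃ t ∈ Icc c d, z = column δ (2 * k) t := by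
  obtain ⟨⟨k, hmk, hkn, hre⟩, him⟩ := hz
  exact ⟨k, ⟨hmk, hkn⟩, z.im, him, eq_column_im_of_re (by rw [hre]; push_cast; ring)⟩

theorem exists_eq_column_of_mem_whitePts (hz : z ∈ WhitePts δ m n c d) :
    ∃ k ∈ Icc m (n - 1), ∃ t ∈ Icc c d, z = column δ (2 * k + 1) t := by
  obtain ⟨⟨k, hmk, hkn, hre⟩, him⟩ := hz
  exact ⟨k, ⟨hmk, hkn⟩, z.im, him, eq_column_im_of_re (by rw [hre]; push_cast; ring)⟩

theorem le_sub_one_of_column_mem_whitePts (hδ : δ ≠ 0) {k : ℤ} {t : ℝ}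
    (h : column δ (2 * k + 1) t ∈ WhitePts δ m n c d) : k ≤ n - 1 := by
  obtain ⟨k', ⟨-, hk'n⟩, t', -, heq⟩ := exists_eq_column_of_mem_whitePts h
  have := congrArg (columnIndex δ) heq
  rw [columnIndex_column hδ, columnIndex_column hδ] at this
  omega

theorem mem_blackPts_union_whitePts_iff :
    z ∈ BlackPts δ m n c d ∪ WhitePts δ m n c d ↔
      ∃ j ∈ Icc (2 * m) (2 * n), z.re = δ * j / 2 ∧ z.im ∈ Icc c d := by
  constructor
  · rintro (⟨⟨k, hmk, hkn, hre⟩, him⟩ | ⟨⟨k, hmk, hkn, hre⟩, him⟩)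
    · exact ⟨2 * k, ⟨by omega, by omega⟩, by rw [hre]; push_cast; ring, him⟩
    · exact ⟨2 * k + 1, ⟨by omega, by omega⟩, by rw [hre]; push_cast; ring, him⟩
  · rintro ⟨j, ⟨hmj, hjn⟩, hre, him⟩
    obtain ⟨k, rfl | rfl⟩ := Int.even_or_odd' j
    · exact .inl ⟨⟨k, by omega, by omega, by rw [hre]; push_cast; ring⟩, him⟩
    · exact .inr ⟨⟨k, by omega, by omega, by rw [hre]; push_cast; ring⟩, him⟩

theorem column_mem_intWhitePts {k : ℤ} (hk : k ∈ Icc m (n - 1)) {s : ℝ} (hs : s ∈ Ioo c d) :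
    column δ (2 * k + 1) s ∈ IntWhitePts δ m n c d :=
  ⟨⟨k, hk.1, hk.2, by simp; ring⟩, by simpa using hs.1, by simpa using hs.2⟩

theorem continuousOn_comp_column (hcd : c ≤ d)
    (hFcont : ∀ z ∈ BlackPts δ m n c d ∪ WhitePts δ m n c d,
      ContinuousOn (fun t : ℝ => F ((z.re : ℂ) + (t : ℂ) * I)) (Icc c d))
    (hj : j ∈ Icc (2 * m) (2 * n)) :
    ContinuousOn (fun t => F (column δ j t)) (Icc c d) := by
  have := hFcont (column δ j c)
    (mem_blackPts_union_whitePts_iff.2 ⟨j, hj, column_re c, by simp [hcd]⟩)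
  rwa [column_re] at this

theorem hasDerivAt_columnJump (hshW : ∀ w ∈ IntWhitePts δ m n c d, SHolWhite δ F w)
    (hj : j ∈ Ico (2 * m) (2 * n)) {s : ℝ} (hs : s ∈ Ioo c d) :
    HasDerivAt (columnJump δ F j)
      (vDerivH δ F (column δ (j + 1) s) - vDerivH δ F (column δ j s)) s := by
  obtain ⟨hmj, hjn⟩ := hj
  obtain ⟨k, rfl | rfl⟩ := Int.even_or_odd' j
  · have hk : k ∈ Icc m (n - 1) := ⟨by omega, by omega⟩
    have hw : ∀ᶠ t : ℝ in 𝓝 0, SHolWhite δ F (column δ (2 * k + 1) s + t * I) := by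
      have : Tendsto (fun t : ℝ => s + t) (𝓝 0) (𝓝 s) := by
        simpa using (continuous_const_add s).tendsto 0
      filter_upwards [this.eventually_mem (Ioo_mem_nhds hs.1 hs.2)] with t ht
      rw [column_add_mul_I]
      exact hshW _ (column_mem_intWhitePts hk ht)
    have := hasVDerivAt_neg_norm_sq_Fup_of_eventually_sHolWhite hw
    rw [← column_add_half, add_sub_cancel_right, column_add_half] at this
    have hjump : columnJump δ F (2 * k) = fun t => -‖Fup F (column δ (2 * k) t)‖ ^ 2 :=
      funext fun t => if_pos (even_two_mul k)
    rw [hjump]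
    exact hasVDerivAt_add_mul_I_iff.1 this
  · have hk : k ∈ Icc m (n - 1) := ⟨by omega, by omega⟩
    have := (hshW _ (column_mem_intWhitePts hk hs)).hasVDerivAt_norm_sq_Fdn
    rw [column_add_half] at this
    have hjump : columnJump δ F (2 * k + 1) = fun t => ‖Fdn F (column δ (2 * k + 1) t)‖ ^ 2 :=
      funext fun t => if_neg (Int.not_even_two_mul_add_one k)
    rw [hjump]
    exact hasVDerivAt_add_mul_I_iff.1 this

theorem continuousOn_vDerivH_column (hF : ContinuousOn (fun t => F (column δ j t)) (Icc c d)) :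
    ContinuousOn (fun t => vDerivH δ F (column δ j t)) (Icc c d) :=
  (continuous_const.mul (continuous_re.comp (continuous_projUp.mul continuous_projDn))
    |>.comp_continuousOn hF)

theorem continuousOn_columnJump (hF : ContinuousOn (fun t => F (column δ j t)) (Icc c d)) :
    ContinuousOn (columnJump δ F j) (Icc c d) := by
  unfold columnJump
  split_ifs
  · exact (continuous_projUp.norm.pow 2).neg.comp_continuousOn hF
  · exact (continuous_projDn.norm.pow 2).comp_continuousOn hF

end Column

theorem sholomorphic_exists_H_general
    (δ : ℝ) (hδ : 0 < δ) (m n : ℤ) (c d : ℝ) (hcd : c < d)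
    (F : ℂ → ℂ)
    (hFcont : ∀ z ∈ BlackPts δ m n c d ∪ WhitePts δ m n c d,
      ContinuousOn (fun t : ℝ => F ((z.re : ℂ) + (t : ℂ) * Complex.I)) (Set.Icc c d))
    (hshW : ∀ w ∈ IntWhitePts δ m n c d, SHolWhite δ F w) :
    ∃ H : ℂ → ℝ,
      (∀ z ∈ BlackPts δ m n c d ∪ WhitePts δ m n c d,
        ContinuousOn (fun t : ℝ => H ((z.re : ℂ) + (t : ℂ) * Complex.I)) (Set.Icc c d)) ∧
      (∀ z ∈ WhitePts δ m n c d, z + (δ / 2 : ℝ) ∈ BlackPts δ m n c d →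
        H (z + (δ / 2 : ℝ)) - H z = ‖Fdn F z‖ ^ 2) ∧
      (∀ z ∈ BlackPts δ m n c d, z + (δ / 2 : ℝ) ∈ WhitePts δ m n c d →
        H (z + (δ / 2 : ℝ)) - H z = -‖Fup F z‖ ^ 2) ∧
      (∀ z ∈ BlackPts δ m n c d ∪ WhitePts δ m n c d, c < z.im → z.im < d →
        ∃ r : ℝ, HasVDerivAt H r z ∧ (r : ℂ) = 2 / δ * Fup F z * Fdn F z) := by
  have hF : ∀ j ∈ Icc (2 * m) (2 * n), ContinuousOn (fun t => F (column δ j t)) (Icc c d) :=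
    fun j hj => continuousOn_comp_column hcd.le hFcont hj
  obtain ⟨h, hcont, hjump, hderiv⟩ := exists_ladder_primitive hcd.le
    (fun j hj => continuousOn_vDerivH_column (hF j hj))
    (fun j hj => continuousOn_columnJump (hF j ⟨hj.1, hj.2.le⟩))
    (fun j hj s hs => hasDerivAt_columnJump hshW hj hs)
  set H : ℂ → ℝ := fun z => h (columnIndex δ z) z.im
  have hH : ∀ j t, H (column δ j t) = h j t := fun j t => by
    simp only [H, columnIndex_column hδ.ne', column_im]
  refine ⟨H, ?_, ?_, ?_, ?_⟩
  · intro z hz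
    obtain ⟨j, hj, hre, -⟩ := mem_blackPts_union_whitePts_iff.1 hz
    refine (hcont j hj).congr fun t _ => ?_
    rw [hre]
    exact hH j t
  · intro z hz _
    obtain ⟨k, ⟨hmk, hkn⟩, t, ht, rfl⟩ := exists_eq_column_of_mem_whitePts hz
    rw [column_add_half, hH, hH, hjump _ ⟨by omega, by omega⟩ t ht, columnJump,
      if_neg (Int.not_even_two_mul_add_one k)]
  · intro z hz hw
    obtain ⟨k, ⟨hmk, hkn⟩, t, ht, rfl⟩ := exists_eq_column_of_mem_blackPts hz
    rw [column_add_half] at hw ⊢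
    have := le_sub_one_of_column_mem_whitePts hδ.ne' hw
    rw [hH, hH, hjump _ ⟨by omega, by omega⟩ t ht, columnJump, if_pos (even_two_mul k)]
  · intro z hz hc hd
    obtain ⟨j, hj, hre, -⟩ := mem_blackPts_union_whitePts_iff.1 hz
    obtain ⟨t, rfl⟩ : ∃ t, z = column δ j t := ⟨_, eq_column_im_of_re hre⟩
    refine ⟨_, hasVDerivAt_add_mul_I_iff.2 ?_, ofReal_vDerivH δ F _⟩
    show HasDerivAt (fun s => H (column δ j s)) _ t
    simp only [hH]
    exact hderiv j hj t ⟨by simpa using hc, by simpa using hd⟩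

/-- Proposition 3.3 (existence part): for `F` s-holomorphic in the rectangular discrete
domain `Ω_δ`, there exists `H : Ω^• ∪ Ω^∘ → ℝ`, continuous on vertical segments, satisfying
the increment relations (a) and the vertical-derivative relation (b)
`Ḣ(z) = (2/δ)·F^↑(z)·F^↓(z)` (a real number). -/
theorem sholomorphic_exists_H
    (δ : ℝ) (hδ : 0 < δ) (m n : ℤ) (hmn : m < n) (c d : ℝ) (hcd : c < d)
    (F : ℂ → ℂ)
    (hFcont : ∀ z ∈ BlackPts δ m n c d ∪ WhitePts δ m n c d,
      ContinuousOn (fun t : ℝ => F ((z.re : ℂ) + (t : ℂ) * Complex.I)) (Set.Icc c d))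
    (hshW : ∀ w ∈ IntWhitePts δ m n c d, SHolWhite δ F w)
    (hshB : ∀ u ∈ IntBlackPts δ m n c d, SHolBlack δ F u) :
    ∃ H : ℂ → ℝ,
      (∀ z ∈ BlackPts δ m n c d ∪ WhitePts δ m n c d,
        ContinuousOn (fun t : ℝ => H ((z.re : ℂ) + (t : ℂ) * Complex.I)) (Set.Icc c d)) ∧
      (∀ z ∈ WhitePts δ m n c d, z + (δ / 2 : ℝ) ∈ BlackPts δ m n c d →
        H (z + (δ / 2 : ℝ)) - H z = ‖Fdn F z‖ ^ 2) ∧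
      (∀ z ∈ BlackPts δ m n c d, z + (δ / 2 : ℝ) ∈ WhitePts δ m n c d →
        H (z + (δ / 2 : ℝ)) - H z = -‖Fup F z‖ ^ 2) ∧
      (∀ z ∈ BlackPts δ m n c d ∪ WhitePts δ m n c d, c < z.im → z.im < d →
        ∃ r : ℝ, HasVDerivAt H r z ∧ (r : ℂ) = 2 / δ * Fup F z * Fdn F z) :=
  sholomorphic_exists_H_general δ hδ m n c d hcd F hFcont hshW
end
end

section
/- Uniqueness part of the key property of s-holomorphic functions (Proposition 3.3, uniqueness): Fix δ > 0, integers m < n and reals c < d, and let Ω^•, Ω^∘ be the black and white points of the discrete rectangular domain Ω_δ. Let F : ℂ → ℂ be continuous on each vertical segment of Ω^• ∪ Ω^∘, and suppose H₁, H₂ : Ω^• ∪ Ω^∘ → ℝ are continuous on each vertical segment of Ω^• ∪ Ω^∘ and both satisfy: (a) for every white point z ∈ Ω^∘ with z + δ/2 ∈ Ω^•, H(z + δ/2) − H(z) = |F^↓(z)|², and for every black point z ∈ Ω^• with z + δ/2 ∈ Ω^∘, H(z + δ/2) − H(z) = −|F^↑(z)|²; and (b) at every point z ∈ Ω^• ∪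 Ω^∘ with c < Im z < d, the vertical derivative Ḣ(z) exists and equals (2/δ)·F^↑(z)·F^↓(z). Then H₁ − H₂ is constant on Ω^• ∪ Ω^∘. -/
noncomputable section

/-!
The difference `H₁ - H₂` has vanishing vertical derivative inside the domain, because (b)
prescribes the same derivative for both, so by the mean value theorem it is constant on every
vertical segment. Relations (a) prescribe the same increments for both along each horizontal
half-step, so the difference is also constant along the bottom row `Im z = c`, which meets every
vertical segment.
-/

open Complex Set

theorem eq_left_of_hasDerivAt_zero {g : ℝ → ℝ} {a b : ℝ} (hg : ContinuousOn g (Icc a b))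
    (hg' : ∀ t ∈ Ioo a b, HasDerivAt g 0 t) {t : ℝ} (ht : t ∈ Icc a b) : g t = g a := by
  rcases ht.1.eq_or_lt with rfl | hat
  · rfl
  obtain ⟨s, -, hs⟩ := exists_hasDerivAt_eq_slope g (fun _ => 0) hat
    (hg.mono (Icc_subset_Icc_right ht.2)) fun s hs => hg' s ⟨hs.1, hs.2.trans_le ht.2⟩
  rw [eq_comm, div_eq_zero_iff, sub_eq_zero, sub_eq_zero] at hs
  exact hs.resolve_right hat.ne'

theorem HasVDerivAt.sub {E : Type*} [NormedAddCommGroup E] [NormedSpace ℝ E] {G₁ G₂ : ℂ → E}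
    {e₁ e₂ : E} {z : ℂ} (h₁ : HasVDerivAt G₁ e₁ z) (h₂ : HasVDerivAt G₂ e₂ z) :
    HasVDerivAt (fun w => G₁ w - G₂ w) (e₁ - e₂) z :=
  HasDerivAt.sub h₁ h₂

theorem HasVDerivAt.hasDerivAt_vertical {E : Type*} [NormedAddCommGroup E] [NormedSpace ℝ E]
    {G : ℂ → E} {e : E} {x : ℂ} {s : ℝ} (h : HasVDerivAt G e (x + s * I)) :
    HasDerivAt (fun t : ℝ => G (x + t * I)) e s := by
  have h' : HasDerivAt (fun t : ℝ => G (x + s * I + t * I)) e (s - s) := by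
    rwa [sub_self]
  convert h'.comp_sub_const s s using 3 with t
  push_cast
  ring

theorem eq_of_hasVDerivAt_zero {G : ℂ → ℝ} {x : ℂ} {a b : ℝ}
    (hG : ContinuousOn (fun t : ℝ => G (x + t * I)) (Icc a b))
    (hG' : ∀ t ∈ Ioo a b, HasVDerivAt G 0 (x + t * I)) {t : ℝ} (ht : t ∈ Icc a b) :
    G (x + t * I) = G (x + a * I) :=
  eq_left_of_hasDerivAt_zero hG (fun s hs => (hG' s hs).hasDerivAt_vertical) ht

section Domain

variable {δ : ℝ} {m n : ℤ} {c d : ℝ}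

theorem re_add_mul_I_mem_blackPts {z : ℂ} (hz : z ∈ BlackPts δ m n c d) {t : ℝ}
    (ht : t ∈ Icc c d) : (z.re : ℂ) + t * I ∈ BlackPts δ m n c d :=
  ⟨by simpa using hz.1, by simpa using ht.1, by simpa using ht.2⟩

theorem re_add_mul_I_mem_whitePts {z : ℂ} (hz : z ∈ WhitePts δ m n c d) {t : ℝ}
    (ht : t ∈ Icc c d) : (z.re : ℂ) + t * I ∈ WhitePts δ m n c d :=
  ⟨by simpa using hz.1, by simpa using ht.1, by simpa using ht.2⟩

theorem re_add_mul_I_mem_union {z : ℂ} (hz : z ∈ BlackPts δ m n c d ∪ WhitePts δ m n c d)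
    {t : ℝ} (ht : t ∈ Icc c d) :
    (z.re : ℂ) + t * I ∈ BlackPts δ m n c d ∪ WhitePts δ m n c d :=
  hz.imp (re_add_mul_I_mem_blackPts · ht) (re_add_mul_I_mem_whitePts · ht)

theorem im_mem_Icc_of_mem_union {z : ℂ} (hz : z ∈ BlackPts δ m n c d ∪ WhitePts δ m n c d) :
    z.im ∈ Icc c d :=
  hz.elim (·.2) (·.2)

theorem eq_at_bottom_of_hasVDerivAt_zero {G : ℂ → ℝ}
    (hcont : ∀ z ∈ BlackPts δ m n c d ∪ WhitePts δ m n c d,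
      ContinuousOn (fun t : ℝ => G ((z.re : ℂ) + t * I)) (Icc c d))
    (hder : ∀ z ∈ BlackPts δ m n c d ∪ WhitePts δ m n c d,
      c < z.im → z.im < d → HasVDerivAt G 0 z)
    {z : ℂ} (hz : z ∈ BlackPts δ m n c d ∪ WhitePts δ m n c d) :
    G z = G ((z.re : ℂ) + c * I) := by
  rw [← eq_of_hasVDerivAt_zero (hcont z hz) (fun t ht => ?_) (im_mem_Icc_of_mem_union hz),
    re_add_im]
  exact hder _ (re_add_mul_I_mem_union hz (Ioo_subset_Icc_self ht)) (by simpa using ht.1)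
    (by simpa using ht.2)

theorem mk_add_ofReal (x t r : ℝ) : (⟨x, t⟩ : ℂ) + (r : ℂ) = ⟨x + r, t⟩ :=
  Complex.ext (by simp) (by simp)

theorem eq_bottom_white_of_increment {G : ℂ → ℝ} (hcd : c ≤ d)
    (hB : ∀ z ∈ BlackPts δ m n c d, z + (δ / 2 : ℝ) ∈ WhitePts δ m n c d →
      G (z + (δ / 2 : ℝ)) = G z)
    {k : ℤ} (hmk : m ≤ k) (hkn : k ≤ n - 1) :
    G ⟨δ * (k + 1 / 2), c⟩ = G ⟨δ * k, c⟩ := by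
  have hstep : (⟨δ * k, c⟩ : ℂ) + (δ / 2 : ℝ) = ⟨δ * (k + 1 / 2), c⟩ := by
    rw [mk_add_ofReal]; ring_nf
  rw [← hstep]
  exact hB _ ⟨⟨k, hmk, by omega, rfl⟩, le_rfl, hcd⟩ (hstep ▸ ⟨⟨k, hmk, hkn, rfl⟩, le_rfl, hcd⟩)

theorem eq_bottom_black_of_increments {G : ℂ → ℝ} (hcd : c ≤ d)
    (hB : ∀ z ∈ BlackPts δ m n c d, z + (δ / 2 : ℝ) ∈ WhitePts δ m n c d →
      G (z + (δ / 2 : ℝ)) = G z)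
    (hW : ∀ z ∈ WhitePts δ m n c d, z + (δ / 2 : ℝ) ∈ BlackPts δ m n c d →
      G (z + (δ / 2 : ℝ)) = G z)
    {k : ℤ} (hmk : m ≤ k) (hkn : k ≤ n) : G ⟨δ * k, c⟩ = G ⟨δ * m, c⟩ := by
  induction k, hmk using Int.leInduction with
  | base => rfl
  | succ j hmj ih =>
    have hstep : (⟨δ * (j + 1 / 2), c⟩ : ℂ) + (δ / 2 : ℝ) = ⟨δ * ((j + 1 : ℤ) : ℝ), c⟩ := by
      rw [mk_add_ofReal]; push_cast; ring_nf
    rw [← hstep, hW _ ⟨⟨j, hmj, by omega, rfl⟩, le_rfl, hcd⟩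
      (hstep ▸ ⟨⟨j + 1, by omega, hkn, rfl⟩, le_rfl, hcd⟩),
      eq_bottom_white_of_increment hcd hB hmj (by omega), ih (by omega)]

theorem exists_eq_const_of_hasVDerivAt_zero_of_increments {G : ℂ → ℝ}
    (hcont : ∀ z ∈ BlackPts δ m n c d ∪ WhitePts δ m n c d,
      ContinuousOn (fun t : ℝ => G ((z.re : ℂ) + t * I)) (Icc c d))
    (hder : ∀ z ∈ BlackPts δ m n c d ∪ WhitePts δ m n c d,
      c < z.im → z.im < d → HasVDerivAt G 0 z)
    (hB : ∀ z ∈ BlackPts δ m n c d, z + (δ / 2 : ℝ) ∈ WhitePts δ m n c d →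
      G (z + (δ / 2 : ℝ)) = G z)
    (hW : ∀ z ∈ WhitePts δ m n c d, z + (δ / 2 : ℝ) ∈ BlackPts δ m n c d →
      G (z + (δ / 2 : ℝ)) = G z) :
    ∃ C : ℝ, ∀ z ∈ BlackPts δ m n c d ∪ WhitePts δ m n c d, G z = C := by
  refine ⟨G ⟨δ * m, c⟩, fun z hz => ?_⟩
  have him := im_mem_Icc_of_mem_union hz
  have hcd : c ≤ d := him.1.trans him.2
  rw [eq_at_bottom_of_hasVDerivAt_zero hcont hder hz, ← mk_eq_add_mul_I]
  rcases hz with ⟨⟨k, hmk, hkn, hre⟩, -⟩ | ⟨⟨k, hmk, hkn, hre⟩, -⟩ <;> rw [hre]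
  · exact eq_bottom_black_of_increments hcd hB hW hmk hkn
  · rw [eq_bottom_white_of_increment hcd hB hmk hkn,
      eq_bottom_black_of_increments hcd hB hW hmk (by omega)]

end Domain

theorem sholomorphic_H_unique_general
    (δ : ℝ) (m n : ℤ) (c d : ℝ)
    (F : ℂ → ℂ)
    (H₁ H₂ : ℂ → ℝ)
    (hHcont : ∀ H ∈ ({H₁, H₂} : Set (ℂ → ℝ)), ∀ z ∈ BlackPts δ m n c d ∪ WhitePts δ m n c d,
      ContinuousOn (fun t : ℝ => H ((z.re : ℂ) + (t : ℂ) * Complex.I)) (Set.Icc c d))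
    (ha₁ : ∀ H ∈ ({H₁, H₂} : Set (ℂ → ℝ)), ∀ z ∈ WhitePts δ m n c d,
      z + (δ / 2 : ℝ) ∈ BlackPts δ m n c d →
        H (z + (δ / 2 : ℝ)) - H z = ‖Fdn F z‖ ^ 2)
    (ha₂ : ∀ H ∈ ({H₁, H₂} : Set (ℂ → ℝ)), ∀ z ∈ BlackPts δ m n c d,
      z + (δ / 2 : ℝ) ∈ WhitePts δ m n c d →
        H (z + (δ / 2 : ℝ)) - H z = -‖Fup F z‖ ^ 2)
    (hb : ∀ H ∈ ({H₁, H₂} : Set (ℂ → ℝ)), ∀ z ∈ BlackPts δ m n c d ∪ WhitePts δ m n c d,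
      c < z.im → z.im < d →
        ∃ r : ℝ, HasVDerivAt H r z ∧ (r : ℂ) = 2 / δ * Fup F z * Fdn F z) :
    ∃ C : ℝ, ∀ z ∈ BlackPts δ m n c d ∪ WhitePts δ m n c d, H₁ z - H₂ z = C := by
  have h₁ : H₁ ∈ ({H₁, H₂} : Set (ℂ → ℝ)) := mem_insert _ _
  have h₂ : H₂ ∈ ({H₁, H₂} : Set (ℂ → ℝ)) := mem_insert_of_mem _ rfl
  refine exists_eq_const_of_hasVDerivAt_zero_of_increments
    (fun z hz => (hHcont H₁ h₁ z hz).sub (hHcont H₂ h₂ z hz)) (fun z hz hc hd => ?_)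
    (fun z hz hw => ?_) (fun z hz hb' => ?_)
  · obtain ⟨r₁, hr₁, e₁⟩ := hb H₁ h₁ z hz hc hd
    obtain ⟨r₂, hr₂, e₂⟩ := hb H₂ h₂ z hz hc hd
    obtain rfl : r₁ = r₂ := by exact_mod_cast e₁.trans e₂.symm
    simpa only [sub_self] using hr₁.sub hr₂
  · linarith [ha₂ H₁ h₁ z hz hw, ha₂ H₂ h₂ z hz hw]
  · linarith [ha₁ H₁ h₁ z hz hb', ha₁ H₂ h₂ z hz hb']

/-- Proposition 3.3 (uniqueness part): two functions `H₁, H₂`, continuous on vertical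
segments and both satisfying the increment relations (a) and the vertical-derivative
relation (b), differ by a constant on `Ω^• ∪ Ω^∘`. -/
theorem sholomorphic_H_unique
    (δ : ℝ) (hδ : 0 < δ) (m n : ℤ) (hmn : m < n) (c d : ℝ) (hcd : c < d)
    (F : ℂ → ℂ)
    (hFcont : ∀ z ∈ BlackPts δ m n c d ∪ WhitePts δ m n c d,
      ContinuousOn (fun t : ℝ => F ((z.re : ℂ) + (t : ℂ) * Complex.I)) (Set.Icc c d))
    (H₁ H₂ : ℂ → ℝ)
    (hHcont : ∀ H ∈ ({H₁, H₂} : Set (ℂ → ℝ)), ∀ z ∈ BlackPts δ m n c d ∪ WhitePts δ m n c d,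
      ContinuousOn (fun t : ℝ => H ((z.re : ℂ) + (t : ℂ) * Complex.I)) (Set.Icc c d))
    (ha₁ : ∀ H ∈ ({H₁, H₂} : Set (ℂ → ℝ)), ∀ z ∈ WhitePts δ m n c d,
      z + (δ / 2 : ℝ) ∈ BlackPts δ m n c d →
        H (z + (δ / 2 : ℝ)) - H z = ‖Fdn F z‖ ^ 2)
    (ha₂ : ∀ H ∈ ({H₁, H₂} : Set (ℂ → ℝ)), ∀ z ∈ BlackPts δ m n c d,
      z + (δ / 2 : ℝ) ∈ WhitePts δ m n c d →
        H (z + (δ / 2 : ℝ)) - H z = -‖Fup F z‖ ^ 2)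
    (hb : ∀ H ∈ ({H₁, H₂} : Set (ℂ → ℝ)), ∀ z ∈ BlackPts δ m n c d ∪ WhitePts δ m n c d,
      c < z.im → z.im < d →
        ∃ r : ℝ, HasVDerivAt H r z ∧ (r : ℂ) = 2 / δ * Fup F z * Fdn F z) :
    ∃ C : ℝ, ∀ z ∈ BlackPts δ m n c d ∪ WhitePts δ m n c d, H₁ z - H₂ z = C :=
  sholomorphic_H_unique_general δ m n c d F H₁ H₂ hHcont ha₁ ha₂ hb
end
end

section
/- Local Laplacian identity at a black point (from the proof of Proposition 3.3): Let δ > 0, u ∈ ℂ, F : ℂ → ℂ and H : ℂ → ℝ. Assume: (i) F is s-holomorphic at the black point u; (ii) there is a neighbourhood of 0 in ℝ such that for all t in it the vertical derivative Ḣ(u + it) exists and equals (2/δ)·F^↑(u + it)·F^↓(u + it); (iii) H(u − δ) − H(u) = |F^↑(u − δ/2)|² − |F^↓(u − δ/2)|² and H(u + δ) − H(u) = |F^↓(u + δ/2)|² − |F^↑(u + δ/2)|². Then the second vertical derivative Ḧ(u) exists and Ḧ(u) + (1/δ²)·(H(u + δ) + H(u − δ) − 2·H(u)) = (1/δ²)·|F(u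 + δ/2) − F(u − δ/2)|². -/
noncomputable section

/-!
Along the vertical line through `u` the derivative of `H` is `Re (2/δ · F^↑ F^↓)`, so by the
product rule `Ḧ(u)` is `2/δ` times the real part of `Ḟ^↑ F^↓ + F^↑ Ḟ^↓`, and s-holomorphicity
expresses all four factors through `A = F(u + δ/2)` and `B = F(u - δ/2)`. Together with the second
difference of `H` given by the boundary hypotheses, this leaves a quadratic identity in `A` and `B`.
It holds because `ℓ(↑) ⊥ ℓ(↓)` and `|p|² = i p²` on `ℓ(↑)`, `|q|² = -i q²` on `ℓ(↓)`, so the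
bracket is real and everything collapses to `|A^↑ - B^↑|² + |A^↓ - B^↓|² = |A - B|²`.
-/

open Complex

section VerticalDerivative

variable {E E' : Type*} [NormedAddCommGroup E] [NormedSpace ℝ E] [NormedAddCommGroup E']
  [NormedSpace ℝ E'] {𝔸 : Type*} [NormedRing 𝔸] [NormedAlgebra ℝ 𝔸] {z : ℂ}

theorem HasVDerivAt.continuousLinearMap_comp {G : ℂ → E} {d : E} (L : E →L[ℝ] E')
    (hG : HasVDerivAt G d z) :
    HasVDerivAt (fun w => L (G w)) (L d) z :=
  L.hasFDerivAt.comp_hasDerivAt 0 hG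

theorem HasVDerivAt.mul {G K : ℂ → 𝔸} {a b : 𝔸} (hG : HasVDerivAt G a z)
    (hK : HasVDerivAt K b z) : HasVDerivAt (fun w => G w * K w) (a * K z + G z * b) z := by
  simpa [HasVDerivAt] using HasDerivAt.fun_mul hG hK

theorem HasVDerivAt.const_mul {G : ℂ → 𝔸} {a : 𝔸} (c : 𝔸) (hG : HasVDerivAt G a z) :
    HasVDerivAt (fun w => c * G w) (c * a) z :=
  HasDerivAt.const_mul c hG

end VerticalDerivative

theorem sq_norm_sub_eq_projUp_projDn (A B : ℂ) :
    2 * (I * (projDn A - projDn B) * projDn B + projUp A * (I * (projUp A - projUp B))).re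
      + ((‖projDn A‖ ^ 2 - ‖projUp A‖ ^ 2) + (‖projUp B‖ ^ 2 - ‖projDn B‖ ^ 2))
      = ‖A - B‖ ^ 2 := by
  simp only [projUp, projDn, Complex.sq_norm, normSq_apply, mul_re, mul_im, div_ofNat_re,
    div_ofNat_im, add_re, add_im, sub_re, sub_im, I_re, I_im, conj_re, conj_im]
  ring

theorem one_div_sq_mul_sq_norm_sub_eq_projUp_projDn (δ : ℝ) (A B : ℂ) :
    (2 / δ * (I / δ * (projDn A - projDn B) * projDn B
        + projUp A * (I / δ * (projUp A - projUp B)))).re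
      + 1 / δ ^ 2 * ((‖projDn A‖ ^ 2 - ‖projUp A‖ ^ 2) + (‖projUp B‖ ^ 2 - ‖projDn B‖ ^ 2))
      = 1 / δ ^ 2 * ‖A - B‖ ^ 2 := by
  have hscale : 2 / (δ : ℂ) * (I / δ * (projDn A - projDn B) * projDn B
        + projUp A * (I / δ * (projUp A - projUp B)))
      = ((2 / δ ^ 2 : ℝ) : ℂ) * (I * (projDn A - projDn B) * projDn B
        + projUp A * (I * (projUp A - projUp B))) := by
    push_cast
    ring
  rw [hscale, re_ofReal_mul, ← sq_norm_sub_eq_projUp_projDn A B]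
  ring

theorem SHolBlack.hasVDerivAt_re_Fup_mul_Fdn {δ : ℝ} {F : ℂ → ℂ} {u : ℂ}
    (hsh : SHolBlack δ F u) :
    HasVDerivAt (fun z => (2 / δ * Fup F z * Fdn F z).re)
      (2 / δ * (I / δ * (Fdn F (u + (δ / 2 : ℝ)) - Fdn F (u - (δ / 2 : ℝ)))
          * Fdn F (u - (δ / 2 : ℝ))
        + Fup F (u + (δ / 2 : ℝ))
          * (I / δ * (Fup F (u + (δ / 2 : ℝ)) - Fup F (u - (δ / 2 : ℝ)))))).re u := by
  obtain ⟨hup, hdn, hdup, hddn⟩ := hsh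
  have hderiv := ((hdup.mul hddn).const_mul (2 / (δ : ℂ))).continuousLinearMap_comp reCLM
  rw [hup, hdn] at hderiv
  simpa only [mul_assoc, reCLM_apply] using hderiv

theorem local_laplacian_black_general
    (δ : ℝ) (u : ℂ) (F : ℂ → ℂ) (H : ℂ → ℝ)
    (hsh : SHolBlack δ F u)
    (hH' : ∀ᶠ t in nhds (0 : ℝ), ∃ r : ℝ,
      HasVDerivAt H r (u + (t : ℂ) * Complex.I) ∧
      (r : ℂ) = 2 / δ * Fup F (u + (t : ℂ) * Complex.I) * Fdn F (u + (t : ℂ) * Complex.I))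
    (hleft : H (u - (δ : ℝ)) - H u
      = ‖Fup F (u - (δ / 2 : ℝ))‖ ^ 2 - ‖Fdn F (u - (δ / 2 : ℝ))‖ ^ 2)
    (hright : H (u + (δ : ℝ)) - H u
      = ‖Fdn F (u + (δ / 2 : ℝ))‖ ^ 2 - ‖Fup F (u + (δ / 2 : ℝ))‖ ^ 2) :
    ∃ h2 : ℝ, HasVDeriv2At H h2 u ∧
      h2 + 1 / δ ^ 2 * (H (u + (δ : ℝ)) + H (u - (δ : ℝ)) - 2 * H u)
        = 1 / δ ^ 2 * ‖F (u + (δ / 2 : ℝ)) - F (u - (δ / 2 : ℝ))‖ ^ 2 := by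
  refine ⟨_, ⟨_, ?_, hsh.hasVDerivAt_re_Fup_mul_Fdn⟩, ?_⟩
  · filter_upwards [hH'] with t ⟨r, hr, hr_eq⟩
    rwa [← hr_eq, ofReal_re]
  · have hsum : H (u + (δ : ℝ)) + H (u - (δ : ℝ)) - 2 * H u
        = (‖Fdn F (u + (δ / 2 : ℝ))‖ ^ 2 - ‖Fup F (u + (δ / 2 : ℝ))‖ ^ 2)
          + (‖Fup F (u - (δ / 2 : ℝ))‖ ^ 2 - ‖Fdn F (u - (δ / 2 : ℝ))‖ ^ 2) := by
      linarith
    rw [hsum]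
    exact one_div_sq_mul_sq_norm_sub_eq_projUp_projDn δ _ _

/-- Local Laplacian identity at a black point (from the proof of Proposition 3.3). -/
theorem local_laplacian_black
    (δ : ℝ) (hδ : 0 < δ) (u : ℂ) (F : ℂ → ℂ) (H : ℂ → ℝ)
    (hsh : SHolBlack δ F u)
    (hH' : ∀ᶠ t in nhds (0 : ℝ), ∃ r : ℝ,
      HasVDerivAt H r (u + (t : ℂ) * Complex.I) ∧
      (r : ℂ) = 2 / δ * Fup F (u + (t : ℂ) * Complex.I) * Fdn F (u + (t : ℂ) * Complex.I))
    (hleft : H (u - (δ : ℝ)) - H u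
      = ‖Fup F (u - (δ / 2 : ℝ))‖ ^ 2 - ‖Fdn F (u - (δ / 2 : ℝ))‖ ^ 2)
    (hright : H (u + (δ : ℝ)) - H u
      = ‖Fdn F (u + (δ / 2 : ℝ))‖ ^ 2 - ‖Fup F (u + (δ / 2 : ℝ))‖ ^ 2) :
    ∃ h2 : ℝ, HasVDeriv2At H h2 u ∧
      h2 + 1 / δ ^ 2 * (H (u + (δ : ℝ)) + H (u - (δ : ℝ)) - 2 * H u)
        = 1 / δ ^ 2 * ‖F (u + (δ / 2 : ℝ)) - F (u - (δ / 2 : ℝ))‖ ^ 2 :=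
  local_laplacian_black_general δ u F H hsh hH' hleft hright
end
end

section
/- S-holomorphicity implies preholomorphicity at a white point: Let δ > 0 and F : ℂ → ℂ be s-holomorphic at the white point w ∈ ℂ. Then the vertical derivative Ḟ(w) of F at w exists and satisfies (1/δ)·(F(w + δ/2) − F(w − δ/2)) + i·Ḟ(w) = 0. -/
noncomputable section

theorem projUp_add_projDn (a : ℂ) : projUp a + projDn a = a := by
  simp only [projUp, projDn]
  ring

theorem Fup_add_Fdn (F : ℂ → ℂ) (z : ℂ) : Fup F z + Fdn F z = F z :=
  projUp_add_projDn (F z)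

theorem HasVDerivAt.add {E : Type*} [NormedAddCommGroup E] [NormedSpace ℝ E]
    {G H : ℂ → E} {d e : E} {z : ℂ} (hG : HasVDerivAt G d z) (hH : HasVDerivAt H e z) :
    HasVDerivAt (G + H) (d + e) z :=
  HasDerivAt.add hG hH

theorem SHolWhite.hasVDerivAt {δ : ℝ} {F : ℂ → ℂ} {w : ℂ} (hsh : SHolWhite δ F w) :
    HasVDerivAt F (Complex.I / δ * (F (w + (δ / 2 : ℝ)) - F (w - (δ / 2 : ℝ)))) w := by
  obtain ⟨-, -, hUp, hDn⟩ := hsh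
  have hF := hUp.add hDn
  rw [show Fup F + Fdn F = F from funext (Fup_add_Fdn F)] at hF
  convert hF using 1
  rw [← Fup_add_Fdn F (w + (δ / 2 : ℝ)), ← Fup_add_Fdn F (w - (δ / 2 : ℝ))]
  ring

theorem shol_white_prehol_general
    (δ : ℝ) (w : ℂ) (F : ℂ → ℂ) (hsh : SHolWhite δ F w) :
    ∃ dF : ℂ, HasVDerivAt F dF w ∧
      1 / δ * (F (w + (δ / 2 : ℝ)) - F (w - (δ / 2 : ℝ))) + Complex.I * dF = 0 := by
  refine ⟨_, hsh.hasVDerivAt, ?_⟩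
  linear_combination (1 / δ * (F (w + (δ / 2 : ℝ)) - F (w - (δ / 2 : ℝ)))) * Complex.I_mul_I

/-- S-holomorphicity implies preholomorphicity at a white point. -/
theorem shol_white_prehol
    (δ : ℝ) (hδ : 0 < δ) (w : ℂ) (F : ℂ → ℂ) (hsh : SHolWhite δ F w) :
    ∃ dF : ℂ, HasVDerivAt F dF w ∧
      1 / δ * (F (w + (δ / 2 : ℝ)) - F (w - (δ / 2 : ℝ))) + Complex.I * dF = 0 :=
  shol_white_prehol_general δ w F hsh
end
end
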